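/- arXiv:1412.8460 — 2 statements merged into one kernel-verified Lean document; each statement's English description precedes it below -/
import Mathlib

section
/- If G is a finite graph and U is a set of vertices such that deleting U from G removes all cycles (i.e., G \ U is a forest), then c(G) ≤ 2^{|U|}. -/
open Classical

variable {V : Type*}

/-- A finset of vertices is independent if no two of its members are adjacent. -/
def IsIndepSet (G : SimpleGraph V) (s : Finset V) : Prop :=
  ∀ u ∈ s, ∀ v ∈ s, ¬ G.Adj u v

/-- The set of faces of the independence complex of `G` (including the empty face). -/
def IndFaces (G : SimpleGraph V) : Set (Finset V) :=
  {s | IsIndepSet G s}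

/-- `P` is a matching on the face poset `Δ`: a set of disjoint covering pairs. -/
def IsPosetMatching (Δ : Set (Finset V)) (P : Set (Finset V × Finset V)) : Prop :=
  (∀ p ∈ P, p.1 ∈ Δ ∧ p.2 ∈ Δ ∧ p.1 ⊆ p.2 ∧ p.2.card = p.1.card + 1) ∧
  (∀ p ∈ P, ∀ q ∈ P, p ≠ q → p.1 ≠ q.1 ∧ p.1 ≠ q.2 ∧ p.2 ≠ q.1 ∧ p.2 ≠ q.2)

/-- A cycle in a matching: distinct matched pairs `{σ₁⊂τ₁},…,{σₙ⊂τₙ}`, `n > 1`,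
with `σ_{i+1} ⊂ τ_i` for `i < n` and `σ₁ ⊂ τₙ`. -/
def MatchingHasCycle (P : Set (Finset V × Finset V)) : Prop :=
  ∃ n : ℕ, 2 ≤ n ∧ ∃ f : ℕ → Finset V × Finset V,
    (∀ i < n, f i ∈ P) ∧ Set.InjOn f (Set.Iio n) ∧
    (∀ i, i + 1 < n → (f (i + 1)).1 ⊂ (f i).2) ∧ (f 0).1 ⊂ (f (n - 1)).2

/-- An acyclic (Morse) matching on the face poset `Δ`. -/
def IsAcyclicMatching (Δ : Set (Finset V)) (P : Set (Finset V × Finset V)) : Prop :=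
  IsPosetMatching Δ P ∧ ¬ MatchingHasCycle P

/-- The critical (unmatched) faces of `Δ` with respect to `P`. -/
def criticalSet (Δ : Set (Finset V)) (P : Set (Finset V × Finset V)) : Set (Finset V) :=
  {s ∈ Δ | ∀ p ∈ P, s ≠ p.1 ∧ s ≠ p.2}

/-- `cInvariant G` is the minimal number of critical cells in an acyclic matching on the
face poset of the independence complex of `G`. -/
noncomputable def cInvariant (G : SimpleGraph V) : ℕ :=
  sInf {n | ∃ P, IsAcyclicMatching (IndFaces G) P ∧ (criticalSet (IndFaces G) P).ncard = n}

/-!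
Split the face poset of a complex `Δ` at a vertex `v` into the deletion (faces avoiding `v`) and
the link (faces `σ ∌ v` with `σ ∪ {v} ∈ Δ`). Acyclic matchings of the two parts glue, after
lifting the link by `σ ↦ σ ∪ {v}`, to an acyclic matching of `Δ`: a gradient path can go from the
lifted part down into the deletion but never back. Hence critical cells add up. For `Ind(G[S])`
the deletion is `Ind(G[S \ v])` and the link is `Ind(G[S \ N[v]])`, so splitting at the vertices
of `U` one by one doubles the bound at each step and ends in forests. A forest has a vertex `v` of
degree at most one. If `v` is isolated, `Ind` is a cone with apex `v` and is matched perfectly;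
if `v` has one neighbour `w`, the deletion of `w` is a cone with apex `v` and the link of `w` is
again a forest, so by induction a forest needs at most one critical cell.
-/

theorem Finset.insert_injOn_setOf_notMem (v : V) : Set.InjOn (insert v) {s : Finset V | v ∉ s} :=
  fun s hs t ht h => by
    simpa [Finset.erase_insert hs, Finset.erase_insert ht] using congrArg (Finset.erase · v) h

theorem Finset.ssubset_of_insert_ssubset_insert {a : V} {s t : Finset V} (ha : a ∉ s)
    (h : insert a s ⊂ insert a t) : s ⊂ t :=
  ((Finset.insert_subset_insert_iff ha).1 h.1).ssubset_of_ne fun hst => h.ne (hst ▸ rfl)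

def HasMorseMatching (Δ : Set (Finset V)) (k : ℕ) : Prop :=
  ∃ P, IsAcyclicMatching Δ P ∧ (criticalSet Δ P).ncard ≤ k

theorem HasMorseMatching.mono {Δ : Set (Finset V)} {k l : ℕ} (h : HasMorseMatching Δ k)
    (hkl : k ≤ l) : HasMorseMatching Δ l :=
  let ⟨P, hP, hk⟩ := h
  ⟨P, hP, hk.trans hkl⟩

theorem hasMorseMatching_of_ncard_le {Δ : Set (Finset V)} {k : ℕ} (h : Δ.ncard ≤ k) :
    HasMorseMatching Δ k := by
  refine ⟨∅, ⟨⟨by simp, by simp⟩, ?_⟩, ?_⟩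
  · rintro ⟨n, hn, f, hmem, -⟩
    exact hmem 0 (by omega)
  · simpa [criticalSet] using h

theorem cInvariant_le_of_hasMorseMatching {G : SimpleGraph V} {k : ℕ}
    (h : HasMorseMatching (IndFaces G) k) : cInvariant G ≤ k := by
  obtain ⟨P, hP, hk⟩ := h
  exact le_trans (Nat.sInf_le ⟨P, hP, rfl⟩) hk

section Cycles

variable {P Q : Set (Finset V × Finset V)}

theorem not_matchingHasCycle_of_potential (r : Finset V × Finset V → ℕ)
    (hr : ∀ p ∈ P, ∀ q ∈ P, q ≠ p → q.1 ⊂ p.2 → r q < r p) : ¬ MatchingHasCycle P := by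
  rintro ⟨n, hn, f, hmem, hinj, hstep, hwrap⟩
  have hne : ∀ i j, i < n → j < n → i ≠ j → f i ≠ f j := fun i j hi hj hij h =>
    hij (hinj hi hj h)
  have hdesc : ∀ j < n, r (f j) + j ≤ r (f 0) := by
    intro j hj
    induction j with
    | zero => simp
    | succ j ih =>
      have := hr _ (hmem j (by omega)) _ (hmem (j + 1) hj) (hne _ _ hj (by omega) (by omega))
        (hstep j hj)
      have := ih (by omega)
      omega
  have := hr _ (hmem (n - 1) (by omega)) _ (hmem 0 (by omega))
    (hne _ _ (by omega) (by omega) (by omega)) hwrap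
  have := hdesc (n - 1) (by omega)
  omega

theorem MatchingHasCycle.map (g : Finset V × Finset V → Finset V × Finset V)
    (hg : Set.MapsTo g P Q) (hinj : Set.InjOn g P)
    (hstep : ∀ p ∈ P, ∀ q ∈ P, q.1 ⊂ p.2 → (g q).1 ⊂ (g p).2) (hc : MatchingHasCycle P) :
    MatchingHasCycle Q := by
  obtain ⟨n, hn, f, hmem, hfinj, hfstep, hwrap⟩ := hc
  have hmaps : Set.MapsTo f (Set.Iio n) P := fun i hi => hmem i hi
  refine ⟨n, hn, g ∘ f, fun i hi => hg (hmem i hi), hinj.comp hfinj hmaps, ?_, ?_⟩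
  · exact fun i hi => hstep _ (hmem i (by omega)) _ (hmem (i + 1) hi) (hfstep i hi)
  · exact hstep _ (hmem (n - 1) (by omega)) _ (hmem 0 (by omega)) hwrap

theorem MatchingHasCycle.of_union (hc : MatchingHasCycle (P ∪ Q))
    (hclosed : ∀ p ∈ P, ∀ q ∈ P ∪ Q, q.1 ⊂ p.2 → q ∈ P) :
    MatchingHasCycle P ∨ MatchingHasCycle Q := by
  obtain ⟨n, hn, f, hmem, hinj, hstep, hwrap⟩ := hc
  by_cases hP : ∃ i < n, f i ∈ P
  · obtain ⟨i₀, hi₀, hfi₀⟩ := hP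
    have hforward : ∀ i j, i ≤ j → j < n → f i ∈ P → f j ∈ P := by
      intro i j hij hj hi
      induction j, hij using Nat.le_induction with
      | base => exact hi
      | succ j _ ih => exact hclosed _ (ih (by omega)) _ (hmem (j + 1) hj) (hstep j hj)
    have h0 : f 0 ∈ P := hclosed _ (hforward i₀ (n - 1) (by omega) (by omega) hfi₀) _
      (hmem 0 (by omega)) hwrap
    exact Or.inl ⟨n, hn, f, fun j hj => hforward 0 j (Nat.zero_le j) hj h0, hinj, hstep, hwrap⟩
  · push Not at hP
    exact Or.inr ⟨n, hn, f, fun i hi => (hmem i hi).resolve_left (hP i hi), hinj, hstep, hwrap⟩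

end Cycles

def faceDeletion (Δ : Set (Finset V)) (v : V) : Set (Finset V) := {s ∈ Δ | v ∉ s}

def faceLink (Δ : Set (Finset V)) (v : V) : Set (Finset V) := {s | v ∉ s ∧ insert v s ∈ Δ}

section DeletionLink

variable {Δ : Set (Finset V)} {v : V} {P₁ P₂ : Set (Finset V × Finset V)}

theorem hasMorseMatching_zero_of_cone (hcone : ∀ s, insert v s ∈ Δ ↔ s ∈ Δ) :
    HasMorseMatching Δ 0 := by
  set P := (fun s => (s, insert v s)) '' faceDeletion Δ v
  refine ⟨P, ⟨⟨?_, ?_⟩, ?_⟩, ?_⟩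
  · rintro _ ⟨s, ⟨hs, hvs⟩, rfl⟩
    exact ⟨hs, (hcone s).2 hs, Finset.subset_insert v s, Finset.card_insert_of_notMem hvs⟩
  · rintro _ ⟨s, ⟨-, hvs⟩, rfl⟩ _ ⟨t, ⟨-, hvt⟩, rfl⟩ hne
    have hst : s ≠ t := fun h => hne (h ▸ rfl)
    refine ⟨hst, ?_, ?_, fun h => hst (Finset.insert_injOn_setOf_notMem v hvs hvt h)⟩
    · rintro rfl
      exact hvs (Finset.mem_insert_self v t)
    · intro h
      exact hvt ((show insert v s = t from h) ▸ Finset.mem_insert_self v s)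
  · refine not_matchingHasCycle_of_potential (fun p => p.1.card) ?_
    rintro _ ⟨s, ⟨-, hvs⟩, rfl⟩ _ ⟨t, ⟨-, hvt⟩, rfl⟩ hne hts
    have hts' : t ⊆ s := fun x hx => by
      rcases Finset.mem_insert.1 (hts.1 hx) with rfl | hx'
      exacts [absurd hx hvt, hx']
    exact Finset.card_lt_card (hts'.ssubset_of_ne fun h => hne (h ▸ rfl))
  · suffices criticalSet Δ P = ∅ by simp [this]
    rw [Set.eq_empty_iff_forall_notMem]
    rintro s ⟨hs, hcrit⟩
    by_cases hvs : v ∈ s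
    · refine (hcrit _ ⟨s.erase v, ⟨?_, Finset.notMem_erase v s⟩, rfl⟩).2 ?_
      · rwa [← hcone, Finset.insert_erase hvs]
      · exact (Finset.insert_erase hvs).symm
    · exact (hcrit _ ⟨s, ⟨hs, hvs⟩, rfl⟩).1 rfl

theorem isPosetMatching_union_image_insert (h₁ : IsPosetMatching (faceDeletion Δ v) P₁)
    (h₂ : IsPosetMatching (faceLink Δ v) P₂) :
    IsPosetMatching Δ (P₁ ∪ Prod.map (insert v) (insert v) '' P₂) := by
  have hinj := Finset.insert_injOn_setOf_notMem v
  refine ⟨?_, ?_⟩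
  · rintro p (hp | ⟨q, hq, rfl⟩)
    · obtain ⟨⟨hs, -⟩, ⟨ht, -⟩, hsub, hcard⟩ := h₁.1 p hp
      exact ⟨hs, ht, hsub, hcard⟩
    · obtain ⟨⟨hv₁, hs⟩, ⟨hv₂, ht⟩, hsub, hcard⟩ := h₂.1 q hq
      refine ⟨hs, ht, Finset.insert_subset_insert v hsub, ?_⟩
      simp [Finset.card_insert_of_notMem hv₁, Finset.card_insert_of_notMem hv₂, hcard]
  · rintro p (hp | ⟨p, hp, rfl⟩) q (hq | ⟨q, hq, rfl⟩) hne
    · exact h₁.2 p hp q hq hne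
    · obtain ⟨⟨-, hv₁⟩, ⟨-, hv₂⟩, -⟩ := h₁.1 p hp
      refine ⟨?_, ?_, ?_, ?_⟩ <;> rintro h <;> simp [h] at hv₁ hv₂
    · obtain ⟨⟨-, hv₁⟩, ⟨-, hv₂⟩, -⟩ := h₁.1 q hq
      refine ⟨?_, ?_, ?_, ?_⟩ <;> rintro h <;> simp [← h] at hv₁ hv₂
    · obtain ⟨⟨hp₁, -⟩, ⟨hp₂, -⟩, -⟩ := h₂.1 p hp
      obtain ⟨⟨hq₁, -⟩, ⟨hq₂, -⟩, -⟩ := h₂.1 q hq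
      obtain ⟨h11, h12, h21, h22⟩ := h₂.2 p hp q hq (fun h => hne (h ▸ rfl))
      exact ⟨fun h => h11 (hinj hp₁ hq₁ h), fun h => h12 (hinj hp₁ hq₂ h),
        fun h => h21 (hinj hp₂ hq₁ h), fun h => h22 (hinj hp₂ hq₂ h)⟩

theorem not_matchingHasCycle_union_image_insert (h₁ : IsAcyclicMatching (faceDeletion Δ v) P₁)
    (h₂ : IsAcyclicMatching (faceLink Δ v) P₂) :
    ¬ MatchingHasCycle (P₁ ∪ Prod.map (insert v) (insert v) '' P₂) := by
  intro hc
  -- faces in `P₁` avoid `v`, so a step from `P₁` cannot enter a lifted pair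
  have hclosed : ∀ p ∈ P₁, ∀ q ∈ P₁ ∪ Prod.map (insert v) (insert v) '' P₂, q.1 ⊂ p.2 → q ∈ P₁ := by
    rintro p hp q (hq | ⟨q, -, rfl⟩) hqp
    · exact hq
    · exact absurd (hqp.1 (Finset.mem_insert_self v q.1)) (h₁.1.1 p hp).2.1.2
  rcases hc.of_union hclosed with hc₁ | hc₂
  · exact h₁.2 hc₁
  set erase := Prod.map (Finset.erase · v) (Finset.erase · v)
  have hback : ∀ q ∈ P₂, erase (Prod.map (insert v) (insert v) q) = q := by
    intro q hq
    obtain ⟨⟨hv₁, -⟩, ⟨hv₂, -⟩, -⟩ := h₂.1.1 q hq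
    exact Prod.ext (Finset.erase_insert hv₁) (Finset.erase_insert hv₂)
  refine h₂.2 (hc₂.map erase ?_ ?_ ?_)
  · rintro _ ⟨q, hq, rfl⟩
    rwa [hback q hq]
  · rintro _ ⟨p, hp, rfl⟩ _ ⟨q, hq, rfl⟩ h
    rw [hback p hp, hback q hq] at h
    rw [h]
  · rintro _ ⟨p, hp, rfl⟩ _ ⟨q, hq, rfl⟩ h
    rw [hback p hp, hback q hq]
    exact Finset.ssubset_of_insert_ssubset_insert (h₂.1.1 q hq).1.1 h

theorem criticalSet_union_image_insert_subset :
    criticalSet Δ (P₁ ∪ Prod.map (insert v) (insert v) '' P₂) ⊆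
      criticalSet (faceDeletion Δ v) P₁ ∪ insert v '' criticalSet (faceLink Δ v) P₂ := by
  rintro s ⟨hs, hcrit⟩
  by_cases hvs : v ∈ s
  · refine Or.inr ⟨s.erase v, ⟨⟨Finset.notMem_erase v s, by rwa [Finset.insert_erase hvs]⟩,
      fun p hp => ?_⟩, Finset.insert_erase hvs⟩
    have := hcrit _ (Or.inr ⟨p, hp, rfl⟩)
    constructor <;> intro h <;> simp [← h, Finset.insert_erase hvs] at this
  · exact Or.inl ⟨⟨hs, hvs⟩, fun p hp => hcrit p (Or.inl hp)⟩

theorem HasMorseMatching.of_faceDeletion_faceLink [Finite V] {a b : ℕ}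
    (h₁ : HasMorseMatching (faceDeletion Δ v) a) (h₂ : HasMorseMatching (faceLink Δ v) b) :
    HasMorseMatching Δ (a + b) := by
  obtain ⟨P₁, hP₁, ha⟩ := h₁
  obtain ⟨P₂, hP₂, hb⟩ := h₂
  refine ⟨_, ⟨isPosetMatching_union_image_insert hP₁.1 hP₂.1,
    not_matchingHasCycle_union_image_insert hP₁ hP₂⟩, ?_⟩
  calc _ ≤ (criticalSet (faceDeletion Δ v) P₁ ∪ insert v '' criticalSet (faceLink Δ v) P₂).ncard :=
        Set.ncard_le_ncard criticalSet_union_image_insert_subset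
    _ ≤ (criticalSet (faceDeletion Δ v) P₁).ncard
        + (insert v '' criticalSet (faceLink Δ v) P₂).ncard := Set.ncard_union_le _ _
    _ ≤ a + b := add_le_add ha ((Set.ncard_image_le (Set.toFinite _)).trans hb)

end DeletionLink

theorem SimpleGraph.IsAcyclic.exists_neighborSet_subsingleton [Finite V] [Nonempty V]
    {G : SimpleGraph V} (hG : G.IsAcyclic) : ∃ v, (G.neighborSet v).Subsingleton := by
  obtain ⟨u, _, p, hp, hmax⟩ := SimpleGraph.Walk.exists_isPath_forall_isPath_length_le_length G
  -- every neighbour of the start of a longest path lies on it, hence is its second vertex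
  have hsnd : ∀ w ∈ G.neighborSet u, w = p.snd := by
    intro w hw
    refine hG.eq_snd_of_adj_start hp hw ?_
    by_contra hwp
    have := hmax _ _ _ (hp.cons hwp (h := hw.symm))
    simp at this
  exact ⟨u, fun w hw w' hw' => (hsnd w hw).trans (hsnd w' hw').symm⟩

def indFacesOn (G : SimpleGraph V) (S : Set V) : Set (Finset V) :=
  {s ∈ IndFaces G | ↑s ⊆ S}

section IndFacesOn

variable {G : SimpleGraph V} {S : Set V} {v : V}

theorem indFacesOn_univ (G : SimpleGraph V) : indFacesOn G Set.univ = IndFaces G := by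
  simp [indFacesOn]

theorem isIndepSet_insert {s : Finset V} :
    IsIndepSet G (insert v s) ↔ (∀ x ∈ s, ¬ G.Adj v x) ∧ IsIndepSet G s := by
  simp only [IsIndepSet, Finset.forall_mem_insert, G.irrefl, not_false_eq_true, true_and]
  constructor
  · rintro ⟨hv, hs⟩
    exact ⟨hv, fun x hx => (hs x hx).2⟩
  · rintro ⟨hv, hs⟩
    exact ⟨hv, fun x hx => ⟨fun h => hv x hx h.symm, hs x hx⟩⟩

theorem insert_mem_indFacesOn_iff {s : Finset V} :
    insert v s ∈ indFacesOn G S ↔ v ∈ S ∧ (∀ x ∈ s, ¬ G.Adj v x) ∧ s ∈ indFacesOn G S := by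
  simp only [indFacesOn, IndFaces, Set.mem_ofPred_eq, isIndepSet_insert, Finset.coe_insert,
    Set.insert_subset_iff]
  tauto

theorem mem_indFacesOn_sdiff {T : Set V} {s : Finset V} :
    s ∈ indFacesOn G (S \ T) ↔ s ∈ indFacesOn G S ∧ ∀ x ∈ s, x ∉ T := by
  simp only [indFacesOn, Set.mem_ofPred_eq, Set.subset_sdiff, Set.disjoint_left, Finset.mem_coe,
    and_assoc]

theorem faceDeletion_indFacesOn : faceDeletion (indFacesOn G S) v = indFacesOn G (S \ {v}) := by
  ext s
  simp [faceDeletion, mem_indFacesOn_sdiff]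

theorem faceLink_indFacesOn (hv : v ∈ S) :
    faceLink (indFacesOn G S) v = indFacesOn G (S \ insert v (G.neighborSet v)) := by
  ext s
  simp only [faceLink, Set.mem_ofPred_eq, insert_mem_indFacesOn_iff, mem_indFacesOn_sdiff,
    Set.mem_insert_iff, SimpleGraph.mem_neighborSet, hv, true_and, not_or]
  constructor
  · rintro ⟨hvs, hadj, hs⟩
    exact ⟨hs, fun x hx => ⟨fun h => hvs (h ▸ hx), hadj x hx⟩⟩
  · rintro ⟨hs, hx⟩
    exact ⟨fun h => (hx v h).1 rfl, fun x h => (hx x h).2, hs⟩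

theorem hasMorseMatching_indFacesOn_zero_of_isolated (hv : v ∈ S)
    (hiso : ∀ x ∈ S, ¬ G.Adj v x) : HasMorseMatching (indFacesOn G S) 0 :=
  hasMorseMatching_zero_of_cone fun s => by
    rw [insert_mem_indFacesOn_iff]
    exact ⟨fun h => h.2.2, fun h => ⟨hv, fun x hx => hiso x (h.2 hx), h⟩⟩

theorem HasMorseMatching.indFacesOn_of_deletion_link [Finite V] {a b : ℕ} (hv : v ∈ S)
    (h₁ : HasMorseMatching (indFacesOn G (S \ {v})) a)
    (h₂ : HasMorseMatching (indFacesOn G (S \ insert v (G.neighborSet v))) b) :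
    HasMorseMatching (indFacesOn G S) (a + b) := by
  rw [← faceDeletion_indFacesOn] at h₁
  rw [← faceLink_indFacesOn hv] at h₂
  exact h₁.of_faceDeletion_faceLink h₂

end IndFacesOn

theorem hasMorseMatching_indFacesOn_of_isAcyclic [Finite V] (G : SimpleGraph V) (S : Set V)
    (hS : (G.induce S).IsAcyclic) : HasMorseMatching (indFacesOn G S) 1 := by
  induction S using WellFoundedLT.induction with
  | _ S ih =>
  rcases S.eq_empty_or_nonempty with rfl | ⟨x, hx⟩
  · refine hasMorseMatching_of_ncard_le ((Set.ncard_le_ncard (t := {∅}) ?_).trans_eq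
      (Set.ncard_singleton _))
    intro s hs
    simpa using hs.2
  have : Nonempty S := ⟨⟨x, hx⟩⟩
  obtain ⟨⟨v, hvS⟩, hleaf⟩ := hS.exists_neighborSet_subsingleton
  by_cases hw : ∃ w ∈ S, G.Adj v w
  · obtain ⟨w, hwS, hvw⟩ := hw
    have hdel : HasMorseMatching (indFacesOn G (S \ {w})) 0 := by
      refine hasMorseMatching_indFacesOn_zero_of_isolated ⟨hvS, hvw.ne⟩ fun x hx hvx => hx.2 ?_
      exact congrArg Subtype.val (hleaf (show (G.induce S).Adj ⟨v, hvS⟩ ⟨x, hx.1⟩ from hvx)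
        (show (G.induce S).Adj ⟨v, hvS⟩ ⟨w, hwS⟩ from hvw))
    have hlink := ih (S \ insert w (G.neighborSet w))
      ⟨Set.sdiff_subset, fun h => (h hwS).2 (Set.mem_insert w _)⟩
      (hS.embedding (G.induceHomOfLE Set.sdiff_subset))
    simpa using hdel.indFacesOn_of_deletion_link hwS hlink
  · push Not at hw
    exact (hasMorseMatching_indFacesOn_zero_of_isolated hvS hw).mono zero_le_one

theorem hasMorseMatching_indFacesOn [Finite V] (G : SimpleGraph V) (U S : Set V)
    (hS : (G.induce (S \ U)).IsAcyclic) :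
    HasMorseMatching (indFacesOn G S) (2 ^ (U ∩ S).ncard) := by
  induction S using WellFoundedLT.induction with
  | _ S ih =>
  rcases (U ∩ S).eq_empty_or_nonempty with hUS | ⟨u, huU, huS⟩
  · rw [hUS, Set.ncard_empty, pow_zero]
    rw [sdiff_eq_left.2 (Set.disjoint_iff_inter_eq_empty.2 hUS).symm] at hS
    exact hasMorseMatching_indFacesOn_of_isAcyclic G S hS
  have hmono : ∀ T ⊆ S, (G.induce (T \ U)).IsAcyclic := fun T hT =>
    hS.embedding (G.induceHomOfLE (Set.sdiff_subset_sdiff_left hT))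
  have hdel := ih (S \ {u}) (Set.sdiff_singleton_ssubset.2 huS) (hmono _ Set.sdiff_subset)
  have hlink := ih (S \ insert u (G.neighborSet u))
    ⟨Set.sdiff_subset, fun h => (h huS).2 (Set.mem_insert u _)⟩ (hmono _ Set.sdiff_subset)
  have hcard : (U ∩ (S \ {u})).ncard + 1 = (U ∩ S).ncard := by
    rw [← Set.inter_sdiff_assoc]
    exact Set.ncard_sdiff_singleton_add_one ⟨huU, huS⟩
  have hle : (U ∩ (S \ insert u (G.neighborSet u))).ncard ≤ (U ∩ (S \ {u})).ncard :=
    Set.ncard_le_ncard (Set.inter_subset_inter_right _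
      (Set.sdiff_subset_sdiff_right (Set.singleton_subset_iff.2 (Set.mem_insert u _))))
  refine (hdel.indFacesOn_of_deletion_link huS hlink).mono ?_
  rw [← hcard, pow_succ, mul_two]
  exact Nat.add_le_add_left (Nat.pow_le_pow_right two_pos hle) _

/-- If deleting the vertex set `U` from `G` removes all cycles, then `c(G) ≤ 2^{|U|}`. -/
theorem statement_6 {V : Type*} [Finite V] (G : SimpleGraph V) (U : Set V)
    (h : (G.induce Uᶜ).IsAcyclic) :
    cInvariant G ≤ 2 ^ U.ncard := by
  have := hasMorseMatching_indFacesOn G U Set.univ (by rwa [← Set.compl_eq_univ_sdiff])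
  rw [indFacesOn_univ, Set.inter_univ] at this
  exact cInvariant_le_of_hasMorseMatching this
end

section
/- Let P_n denote the path graph on n vertices. Then c(P_n) = 0 if n ≡ 1 (mod 3), and c(P_n) ≤ 1 otherwise. -/
open Classical

variable {V : Type*}

/-! Vertices of `pathGraph n` are `0, …, n - 1`. Match an independent set `S` with `S ∪ {3k}`
(or `S \ {3k}`), where `k` is least with `3k + 1 ∉ S`. Toggling `3k` does not change `k`, and
`S ∪ {3k}` stays independent because `3k + 1 ∉ S` while `3k - 1` would be adjacent to
`3k - 2 ∈ S`. Along a gradient path the pair `(|S|, k)` strictly decreases lexicographically, so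
the matching is acyclic. A set is left unmatched only if `3k ≥ n`, i.e. it contains every vertex
`≡ 1 (mod 3)`; by independence it is then exactly that set, which is impossible when
`n ≡ 1 (mod 3)` because vertex `n` does not exist. -/

theorem cInvariant_le_ncard_criticalSet {G : SimpleGraph V} {P : Set (Finset V × Finset V)}
    (hP : IsAcyclicMatching (IndFaces G) P) :
    cInvariant G ≤ (criticalSet (IndFaces G) P).ncard :=
  Nat.sInf_le ⟨P, hP, rfl⟩

theorem IsIndepSet.mono {G : SimpleGraph V} {s t : Finset V} (hst : t ⊆ s)
    (hs : IsIndepSet G s) : IsIndepSet G t :=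
  fun u hu v hv => hs u (hst hu) v (hst hv)

theorem isLowerSet_indFaces (G : SimpleGraph V) : IsLowerSet (IndFaces G) :=
  fun _ _ hts hs => IsIndepSet.mono hts hs

theorem IsIndepSet.insert [DecidableEq V] {G : SimpleGraph V} {s : Finset V} {v : V}
    (hs : IsIndepSet G s) (hv : ∀ x ∈ s, ¬ G.Adj v x) : IsIndepSet G (insert v s) := by
  simp only [IsIndepSet, Finset.mem_insert]
  rintro x (rfl | hx) y (rfl | hy) hxy
  · exact G.loopless.irrefl _ hxy
  · exact hv y hy hxy
  · exact hv x hx hxy.symm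
  · exact hs x hx y hy hxy

theorem not_matchingHasCycle_of_lt {α : Type*} [Preorder α] {P : Set (Finset V × Finset V)}
    (φ : Finset V → α)
    (hφ : ∀ p ∈ P, ∀ q ∈ P, p ≠ q → q.1 ⊂ p.2 → φ q.1 < φ p.1) :
    ¬ MatchingHasCycle P := by
  rintro ⟨m, hm, f, hfP, hinj, hstep, hwrap⟩
  have hne {i j : ℕ} (hi : i < m) (hj : j < m) (hij : i ≠ j) : f i ≠ f j :=
    fun h => hij (hinj hi hj h)
  have hchain : ∀ j < m, φ (f j).1 ≤ φ (f 0).1 := by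
    intro j hj
    induction j with
    | zero => exact le_rfl
    | succ j ih =>
      exact (hφ _ (hfP j (by omega)) _ (hfP _ hj) (hne (by omega) hj (by omega))
        (hstep j hj)).le.trans (ih (by omega))
  exact (hφ _ (hfP _ (by omega)) _ (hfP 0 (by omega)) (hne (by omega) (by omega) (by omega))
    hwrap).not_ge (hchain _ (by omega))

section ToggleMatching

variable [DecidableEq V]

def IsTogglePivot (pivot : Finset V → Option V) : Prop :=
  ∀ S T v, pivot S = some v → S.erase v = T.erase v → pivot T = some v

def toggleMatching (Δ : Set (Finset V)) (pivot : Finset V → Option V) :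
    Set (Finset V × Finset V) :=
  {p | ∃ S ∈ Δ, ∃ v, pivot S = some v ∧ v ∉ S ∧ p = (S, insert v S)}

variable {Δ : Set (Finset V)} {pivot : Finset V → Option V}

theorem IsTogglePivot.insert (hpivot : IsTogglePivot pivot) {S : Finset V} {v : V}
    (hv : pivot S = some v) : pivot (insert v S) = some v :=
  hpivot S _ v hv (Finset.erase_insert_eq_erase S v).symm

theorem IsTogglePivot.erase (hpivot : IsTogglePivot pivot) {S : Finset V} {v : V}
    (hv : pivot S = some v) : pivot (S.erase v) = some v :=
  hpivot S _ v hv Finset.erase_idem.symm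

theorem isPosetMatching_toggleMatching (hpivot : IsTogglePivot pivot)
    (hΔ : ∀ S ∈ Δ, ∀ v, pivot S = some v → insert v S ∈ Δ) :
    IsPosetMatching Δ (toggleMatching Δ pivot) := by
  refine ⟨?_, ?_⟩
  · rintro _ ⟨S, hS, v, hv, hvS, rfl⟩
    exact ⟨hS, hΔ S hS v hv, Finset.subset_insert v S, Finset.card_insert_of_notMem hvS⟩
  · rintro _ ⟨S, -, v, hv, hvS, rfl⟩ _ ⟨T, -, w, hw, hwT, rfl⟩ hne
    refine ⟨?_, ?_, ?_, ?_⟩ <;> dsimp only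
    · rintro rfl
      obtain rfl : v = w := Option.some_injective _ (hv.symm.trans hw)
      exact hne rfl
    · rintro rfl
      obtain rfl : w = v := Option.some_injective _ ((hpivot.insert hw).symm.trans hv)
      exact hvS (Finset.mem_insert_self w T)
    · intro h
      obtain rfl : v = w := Option.some_injective _ ((hpivot.insert hv).symm.trans (h ▸ hw))
      exact hwT (h ▸ Finset.mem_insert_self v S)
    · intro h
      obtain rfl : v = w :=
        Option.some_injective _ ((hpivot.insert hv).symm.trans (h ▸ hpivot.insert hw))
      have hST : S = T := by
        rw [← Finset.erase_insert hvS, ← Finset.erase_insert hwT]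
        exact congrArg (Finset.erase · v) h
      exact hne (by rw [hST])

theorem criticalSet_toggleMatching (hpivot : IsTogglePivot pivot) (hΔ : IsLowerSet Δ) :
    criticalSet Δ (toggleMatching Δ pivot) = {S ∈ Δ | pivot S = none} := by
  ext S
  refine ⟨fun ⟨hS, hcrit⟩ => ⟨hS, ?_⟩, fun ⟨hS, hnone⟩ => ⟨hS, ?_⟩⟩
  · rw [Option.eq_none_iff_forall_ne_some]
    intro v hv
    by_cases hvS : v ∈ S
    · refine (hcrit (S.erase v, S) ⟨S.erase v, hΔ (Finset.erase_subset v S) hS, v,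
        hpivot.erase hv, Finset.notMem_erase v S, ?_⟩).2 rfl
      rw [Finset.insert_erase hvS]
    · exact (hcrit _ ⟨S, hS, v, hv, hvS, rfl⟩).1 rfl
  · rintro _ ⟨T, -, v, hv, -, rfl⟩
    refine ⟨?_, ?_⟩
    · rintro rfl
      simp [hv] at hnone
    · rintro rfl
      simp [hpivot.insert hv] at hnone

end ToggleMatching

namespace PathMatching

open SimpleGraph (pathGraph pathGraph_adj)

variable {n : ℕ}

theorem exists_gap (S : Finset (Fin n)) : ∃ k, ∀ x ∈ S, (x : ℕ) ≠ 3 * k + 1 :=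
  ⟨n, fun x _ => by omega⟩

noncomputable def gap (S : Finset (Fin n)) : ℕ :=
  Nat.find (exists_gap S)

noncomputable def pivot (S : Finset (Fin n)) : Option (Fin n) :=
  if h : 3 * gap S < n then some ⟨3 * gap S, h⟩ else none

variable {S T : Finset (Fin n)} {v : Fin n}

theorem gap_spec (S : Finset (Fin n)) : ∀ x ∈ S, (x : ℕ) ≠ 3 * gap S + 1 :=
  Nat.find_spec (exists_gap S)

theorem exists_mem_of_lt_gap {j : ℕ} (hj : j < gap S) : ∃ x ∈ S, (x : ℕ) = 3 * j + 1 := by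
  simpa using Nat.find_min (exists_gap S) hj

theorem gap_le {k : ℕ} (hk : ∀ x ∈ S, (x : ℕ) ≠ 3 * k + 1) : gap S ≤ k :=
  Nat.find_le hk

theorem gap_eq_of_erase_eq {a : Fin n} (ha : (a : ℕ) % 3 ≠ 1) (h : S.erase a = T.erase a) :
    gap S = gap T := by
  have hmem {x : Fin n} (hx : (x : ℕ) % 3 = 1) : x ∈ S ↔ x ∈ T := by
    have hxa : x ≠ a := by rintro rfl; exact ha hx
    simpa [Finset.mem_erase, hxa] using congrArg (x ∈ ·) h
  refine Nat.find_congr' fun {k} => ⟨fun hS x hxT hx => ?_, fun hT x hxS hx => ?_⟩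
  · exact hS x ((hmem (by omega)).2 hxT) hx
  · exact hT x ((hmem (by omega)).1 hxS) hx

theorem pivot_eq_some : pivot S = some v ↔ (v : ℕ) = 3 * gap S := by
  unfold pivot
  split_ifs with h
  · rw [Option.some_inj, Fin.ext_iff, eq_comm]
  · simp only [false_iff]
    omega

theorem pivot_eq_none : pivot S = none ↔ n ≤ 3 * gap S := by
  unfold pivot
  split_ifs with h
  · simp only [false_iff]; omega
  · simp only [true_iff]; omega

theorem isTogglePivot_pivot : IsTogglePivot (pivot (n := n)) := by
  intro S T v hv h
  rw [pivot_eq_some] at hv ⊢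
  rwa [← gap_eq_of_erase_eq (by omega) h]

theorem isIndepSet_insert_pivot (hS : IsIndepSet (pathGraph n) S) (hv : pivot S = some v) :
    IsIndepSet (pathGraph n) (insert v S) := by
  rw [pivot_eq_some] at hv
  refine hS.insert fun x hx hadj => ?_
  rcases pathGraph_adj.1 hadj with hvx | hxv
  · exact gap_spec S x hx (by omega)
  · obtain ⟨y, hy, hyx⟩ := exists_mem_of_lt_gap (S := S) (j := gap S - 1) (by omega)
    exact hS y hy x hx (pathGraph_adj.2 (Or.inl (by omega)))

theorem gap_le_of_subset_insert (hv : pivot S = some v) (hT : T ⊆ insert v S) :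
    gap T ≤ gap S := by
  rw [pivot_eq_some] at hv
  refine gap_le fun x hx => ?_
  rcases Finset.mem_insert.1 (hT hx) with rfl | hxS
  · omega
  · exact gap_spec S x hxS

noncomputable abbrev matching (n : ℕ) : Set (Finset (Fin n) × Finset (Fin n)) :=
  toggleMatching (IndFaces (pathGraph n)) pivot

theorem toLex_lt_of_ssubset {p q : Finset (Fin n) × Finset (Fin n)} (hp : p ∈ matching n)
    (hq : q ∈ matching n) (hpq : p ≠ q) (hsub : q.1 ⊂ p.2) :
    toLex (q.1.card, gap q.1) < toLex (p.1.card, gap p.1) := by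
  obtain ⟨S, -, v, hv, hvS, rfl⟩ := hp
  obtain ⟨T, -, w, hw, hwT, rfl⟩ := hq
  have hcard : T.card < S.card + 1 := by
    simpa [Finset.card_insert_of_notMem hvS] using Finset.card_lt_card hsub
  rw [Prod.Lex.toLex_lt_toLex]
  rcases Nat.lt_succ_iff_lt_or_eq.1 hcard with hlt | heq
  · exact Or.inl hlt
  refine Or.inr ⟨heq, ?_⟩
  have hvT : v ∈ T := by
    by_contra hvT
    have hTS : T = S := Finset.eq_of_subset_of_card_le
      ((Finset.subset_insert_iff_of_notMem hvT).1 hsub.subset) heq.ge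
    subst hTS
    exact hpq (by rw [Option.some_injective _ (hv.symm.trans hw)])
  have hle := gap_le_of_subset_insert hv hsub.subset
  have hne : gap T ≠ gap S := by
    intro h
    rw [pivot_eq_some] at hv hw
    exact hwT (by rwa [Fin.ext (hw.trans (h ▸ hv.symm))])
  exact lt_of_le_of_ne hle hne

theorem isAcyclicMatching : IsAcyclicMatching (IndFaces (pathGraph n)) (matching n) :=
  ⟨isPosetMatching_toggleMatching isTogglePivot_pivot fun _ hS _ hv =>
      isIndepSet_insert_pivot hS hv,
    not_matchingHasCycle_of_lt (fun S => toLex (S.card, gap S)) fun _ hp _ hq =>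
      toLex_lt_of_ssubset hp hq⟩

theorem criticalSet_matching :
    criticalSet (IndFaces (pathGraph n)) (matching n) =
      {S | IsIndepSet (pathGraph n) S ∧ n ≤ 3 * gap S} := by
  rw [criticalSet_toggleMatching isTogglePivot_pivot (isLowerSet_indFaces _)]
  simp only [pivot_eq_none]
  rfl

theorem criticalSet_matching_eq_empty (hn : n % 3 = 1) :
    criticalSet (IndFaces (pathGraph n)) (matching n) = ∅ := by
  rw [criticalSet_matching, Set.eq_empty_iff_forall_notMem]
  rintro S ⟨-, hS⟩
  obtain ⟨x, -, hx⟩ := exists_mem_of_lt_gap (S := S) (j := n / 3) (by omega)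
  omega

theorem mem_iff_of_le_three_mul_gap (hS : IsIndepSet (pathGraph n) S) (hgap : n ≤ 3 * gap S)
    (x : Fin n) : x ∈ S ↔ (x : ℕ) % 3 = 1 := by
  obtain ⟨y, hy, hyx⟩ := exists_mem_of_lt_gap (S := S) (j := x / 3) (by omega)
  constructor
  · intro hx
    by_contra hx1
    exact hS x hx y hy (pathGraph_adj.2 (by omega))
  · intro hx1
    rwa [Fin.ext (show (x : ℕ) = y by omega)]

theorem criticalSet_matching_subsingleton :
    (criticalSet (IndFaces (pathGraph n)) (matching n)).Subsingleton := by
  rw [criticalSet_matching]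
  rintro S ⟨hS, hSgap⟩ T ⟨hT, hTgap⟩
  ext x
  rw [mem_iff_of_le_three_mul_gap hS hSgap, mem_iff_of_le_three_mul_gap hT hTgap]

end PathMatching

/-- For the path `Pₙ` on `n` vertices, `c(Pₙ) = 0` if `n ≡ 1 (mod 3)` and `c(Pₙ) ≤ 1`
otherwise. -/
theorem statement_8 (n : ℕ) :
    (n % 3 = 1 → cInvariant (SimpleGraph.pathGraph n) = 0) ∧
    (n % 3 ≠ 1 → cInvariant (SimpleGraph.pathGraph n) ≤ 1) := by
  have hc := cInvariant_le_ncard_criticalSet (PathMatching.isAcyclicMatching (n := n))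
  refine ⟨fun hn => ?_, fun _ => ?_⟩
  · rwa [PathMatching.criticalSet_matching_eq_empty hn, Set.ncard_empty, Nat.le_zero] at hc
  · exact hc.trans
      (Set.ncard_le_one_iff_subsingleton.2 PathMatching.criticalSet_matching_subsingleton)
end
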